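/- Let s > 1/2 and u ∈ H^s_+(𝕋). Then H_{Π(|u|²u)} = T_{|u|²}H_u + H_u T_{|u|²} − H_u³ and K_{Π(|u|²u)} = T_{|u|²}K_u + K_u T_{|u|²} − K_u³ as operators on L²_+(𝕋). -/

import Mathlib

open scoped BigOperators ComplexConjugate

noncomputable section

/-- The Hardy space `L²₊(𝕋)` of the circle, modeled by the Hilbert space `ℓ²(ℕ, ℂ)` of
sequences of nonnegative Fourier (= Taylor) coefficients. -/
abbrev Hardy : Type := lp (fun _ : ℕ => ℂ) 2

/-- The Fourier coefficients of an element of the Hardy space. -/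
def coeffs (f : Hardy) : ℕ → ℂ := fun n => f n

/-- Membership in the Sobolev space `Hˢ₊(𝕋)`, expressed on Fourier coefficients. -/
def InHs (s : ℝ) (u : ℕ → ℂ) : Prop :=
  Summable fun k : ℕ => ((1 : ℝ) + (k : ℝ) ^ 2) ^ s * ‖u k‖ ^ 2

/-- The `Hˢ` norm, expressed on Fourier coefficients. -/
def hsNorm (s : ℝ) (u : ℕ → ℂ) : ℝ :=
  Real.sqrt (∑' k : ℕ, ((1 : ℝ) + (k : ℝ) ^ 2) ^ s * ‖u k‖ ^ 2)

/-- Membership in the Wiener algebra `W`. -/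
def InW (u : ℕ → ℂ) : Prop := Summable fun k : ℕ => ‖u k‖

/-- The Wiener norm `‖u‖_W = Σ |û(k)|`. -/
def wienerNorm (u : ℕ → ℂ) : ℝ := ∑' k : ℕ, ‖u k‖

/-- The `L²` norm, expressed on Fourier coefficients. -/
def l2Norm (u : ℕ → ℂ) : ℝ := Real.sqrt (∑' k : ℕ, ‖u k‖ ^ 2)

/-- The Hankel operator `H_u(h) = Π(u h̄)`, expressed on Fourier coefficients:
`(H_u h)^(n) = Σ_p û(n+p) conj(ĥ(p))`. -/
def hankel (u h : ℕ → ℂ) : ℕ → ℂ := fun n => ∑' p : ℕ, u (n + p) * conj (h p)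

/-- The shifted Hankel operator `K_u = S* H_u`. -/
def shiftedHankel (u h : ℕ → ℂ) : ℕ → ℂ := fun n => hankel u h (n + 1)

/-- Fourier coefficients of the pointwise product `fg` of two holomorphic (Hardy class)
functions: the Cauchy product. -/
def mulCoeff (f g : ℕ → ℂ) : ℕ → ℂ := fun n => ∑ p ∈ Finset.range (n + 1), f p * g (n - p)

/-- Fourier coefficients of `T_{a b̄}(h) = Π(a b̄ h)` for `a, b, h` in the Hardy class. -/
def toeplitzAB (a b h : ℕ → ℂ) : ℕ → ℂ :=
  fun n => ∑' q : ℕ, conj (b q) * mulCoeff a h (n + q)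

/-- Fourier coefficients of `T_{ā}(h) = Π(ā h)` for `a, h` in the Hardy class. -/
def toeplitzConj (a h : ℕ → ℂ) : ℕ → ℂ := fun n => ∑' q : ℕ, conj (a q) * h (n + q)

/-- The Szegő nonlinearity `Π(|u|²u) = T_{u ū}(u)`. -/
def szegoNL (u : ℕ → ℂ) : ℕ → ℂ := toeplitzAB u u u

/-- The operator `B_u = (i/2) H_u² - i T_{|u|²}` of the Lax pair. -/
def laxB (u h : ℕ → ℂ) : ℕ → ℂ := fun n =>
  Complex.I / 2 * hankel u (hankel u h) n - Complex.I * toeplitzAB u u h n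

/-- The operator `C_u = (i/2) K_u² - i T_{|u|²}` of the Lax pair. -/
def laxC (u h : ℕ → ℂ) : ℕ → ℂ := fun n =>
  Complex.I / 2 * shiftedHankel u (shiftedHankel u h) n - Complex.I * toeplitzAB u u h n

/-- `u : ℝ → L²₊` is a (smooth in time, `Hˢ`-valued) solution of the cubic Szegő equation
`i ∂_t u = Π(|u|²u)`. -/
def IsSzegoSolution (s : ℝ) (u : ℝ → Hardy) : Prop :=
  (∀ t, InHs s (coeffs (u t))) ∧ ContDiff ℝ (⊤ : ℕ∞) u ∧
    ∀ t n, HasDerivAt (fun τ : ℝ => coeffs (u τ) n) (-Complex.I * szegoNL (coeffs (u t)) n) t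

/-- The Hankel operator with symbol `u` (composed with complex conjugation, which does not
change its range), as a linear map on finitely supported sequences. -/
def hankelLM (u : ℕ → ℂ) : (ℕ →₀ ℂ) →ₗ[ℂ] (ℕ → ℂ) :=
  Finsupp.lsum ℂ fun p => LinearMap.toSpanSingleton ℂ (ℕ → ℂ) fun n => u (n + p)

/-- The rank of the Hankel operator `H_u`. -/
def hankelRank (u : ℕ → ℂ) : ℕ := Module.finrank ℂ (LinearMap.range (hankelLM u))

/-- The finite rank manifold `𝒱(d)`: `u` with `rk H_u = [(d+1)/2]` and `rk K_u = [d/2]`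
(recall `K_u = H_{S*u}`). -/
def InV (d : ℕ) (u : ℕ → ℂ) : Prop :=
  InHs (1 / 2) u ∧ FiniteDimensional ℂ (LinearMap.range (hankelLM u)) ∧
    hankelRank u = (d + 1) / 2 ∧ hankelRank (fun n => u (n + 1)) = d / 2

/-- `w = w^y = (I + y H_u²)⁻¹(1)`, characterized by `(I + y H_u²) w = 1`. -/
def IsResolventOne (y : ℝ) (u w : ℕ → ℂ) : Prop :=
  Memℓp w 2 ∧ ∀ n, w n + (y : ℂ) * hankel u (hankel u w) n = if n = 0 then 1 else 0

/-- The Hamiltonian vector field `X_{J^y}(u) = 2iy w^y H_u(w^y)` (a pointwise product of two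
Hardy class functions), expressed on Fourier coefficients; `w` stands for `w^y`. -/
def XJ (y : ℝ) (u w : ℕ → ℂ) : ℕ → ℂ :=
  fun n => 2 * Complex.I * (y : ℂ) * mulCoeff w (hankel u w) n

/-- The operator `G_u^y(h) = -y w^y Π(conj(w^y) h) + y² (H_u w^y) Π(conj(H_u w^y) h)`;
`w` stands for `w^y`. -/
def Gop (y : ℝ) (u w h : ℕ → ℂ) : ℕ → ℂ := fun n =>
  -(y : ℂ) * mulCoeff w (toeplitzConj w h) n
    + (y : ℂ) ^ 2 * mulCoeff (hankel u w) (toeplitzConj (hankel u w) h) n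

/-- The operator `F_u^y(h) = G_u^y(h) - y² (h | H_u w^y) H_u w^y`; `w` stands for `w^y`. -/
def Fop (y : ℝ) (u w h : ℕ → ℂ) : ℕ → ℂ := fun n =>
  Gop y u w h n - (y : ℂ) ^ 2 * (∑' p : ℕ, h p * conj (hankel u w p)) * hankel u w n

/-!
Expanded in Fourier coefficients, with output index `m = n + t` (`t = 0` for `H`, `t = 1` for
`K`), each of the four terms is the sum of `conj (û Q) û A û B conj (ĥ (A + B - m - Q))` over a
region of `(Q, A, B) ∈ ℕ³`: the left-hand side over `m + Q ≤ A + B`, `T_{|u|²}` composed with the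
(shifted) Hankel operator over the part where moreover `A ≤ n + Q`, the Hankel operator composed
with `T_{|u|²}` over the part where `m ≤ A`, and the cube over the intersection of these two
parts. As `t ≤ 1`, the two parts cover the whole region, so the identity is inclusion–exclusion.
All rearrangements are justified by absolute convergence: `û ∈ ℓ¹` because `s > 1/2`, and `ĥ` is
bounded.
-/

open Set Function

section InfiniteSums

variable {α β γ E : Type*}

theorem Set.BijOn.hasSum_indicator_comp_iff [AddCommMonoid E] [TopologicalSpace E]
    {S : Set β} {T : Set γ} {i : γ → β} (hi : BijOn i T S) (f : β → E) {a : E} :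
    HasSum (T.indicator (f ∘ i)) a ↔ HasSum (S.indicator f) a := by
  rw [← hasSum_subtype_iff_indicator, ← hasSum_subtype_iff_indicator,
    ← (hi.equiv i).hasSum_iff]
  rfl

theorem Summable.tsum_prod_prod [NormedAddCommGroup E] [CompleteSpace E]
    {f : α × β × γ → E} (hf : Summable f) :
    ∑' x, f x = ∑' a, ∑' b, ∑' c, f (a, b, c) := by
  rw [hf.tsum_prod]
  exact tsum_congr fun a => (hf.prod_factor a).tsum_prod

theorem Set.BijOn.tsum_indicator_eq_tsum_tsum_tsum {δ : Type*} [NormedAddCommGroup E]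
    [CompleteSpace E] {f : δ → E} (hf : Summable f) {S : Set δ} {T : Set (α × β × γ)}
    {i : α × β × γ → δ} (hi : BijOn i T S) :
    ∑' x, S.indicator f x = ∑' a, ∑' b, ∑' c, T.indicator (f ∘ i) (a, b, c) := by
  have hT := (hi.hasSum_indicator_comp_iff f).2 (hf.indicator S).hasSum
  rw [← hT.tsum_eq, hT.summable.tsum_prod_prod]

theorem tsum_ite_le_eq_sum_range [AddCommMonoid E] [TopologicalSpace E]
    (φ : ℕ → E) (N : ℕ) :
    ∑' a, (if a ≤ N then φ a else 0) = ∑ a ∈ Finset.range (N + 1), φ a := by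
  rw [tsum_eq_sum (s := Finset.range (N + 1))
    fun a ha => if_neg (by simpa [Nat.lt_succ_iff] using ha)]
  exact Finset.sum_congr rfl fun a ha => if_pos (Nat.lt_succ_iff.1 (Finset.mem_range.1 ha))

end InfiniteSums

theorem two_mul_le_mul_sq_add_inv {x w : ℝ} (hw : 0 < w) : 2 * x ≤ w * x ^ 2 + w⁻¹ := by
  have := sq_nonneg (w * x - 1)
  rw [← mul_le_mul_iff_of_pos_left hw]
  field_simp
  nlinarith

theorem summable_one_add_sq_rpow_inv {s : ℝ} (hs : 1 / 2 < s) :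
    Summable fun k : ℕ => (((1 : ℝ) + (k : ℝ) ^ 2) ^ s)⁻¹ := by
  refine Summable.of_norm_bounded_eventually_nat
    (Real.summable_nat_rpow_inv.2 (by linarith : 1 < 2 * s)) ?_
  filter_upwards [Filter.eventually_gt_atTop 0] with k hk
  rw [Real.norm_of_nonneg (by positivity), Real.rpow_mul (Nat.cast_nonneg k), Real.rpow_two]
  gcongr
  linarith

theorem InHs.summable_norm {s : ℝ} (hs : 1 / 2 < s) {u : ℕ → ℂ} (hu : InHs s u) :
    Summable fun k => ‖u k‖ := by
  refine Summable.of_nonneg_of_le (fun k => norm_nonneg _) (fun k => ?_)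
    ((hu.add (summable_one_add_sq_rpow_inv hs)).div_const 2)
  have := two_mul_le_mul_sq_add_inv (x := ‖u k‖)
    (w := ((1 : ℝ) + (k : ℝ) ^ 2) ^ s) (by positivity)
  linarith

namespace SzegoCubic

variable {u h : ℕ → ℂ}

/-- `x = (Q, A, B)`; outside `hankelRegion m` the index of `h` is truncated and meaningless. -/
def cubicSummand (u h : ℕ → ℂ) (m : ℕ) (x : ℕ × ℕ × ℕ) : ℂ :=
  conj (u x.1) * u x.2.1 * u x.2.2 * conj (h (x.2.1 + x.2.2 - m - x.1))

def hankelRegion (m : ℕ) : Set (ℕ × ℕ × ℕ) := {x | m + x.1 ≤ x.2.1 + x.2.2}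

theorem summable_cubicSummand (hu : Summable fun k => ‖u k‖)
    (hh : BddAbove (range fun k => ‖h k‖)) (m : ℕ) : Summable (cubicSummand u h m) := by
  obtain ⟨C, hC⟩ := hh
  have hu3 : Summable fun x : ℕ × ℕ × ℕ => ‖u x.1‖ * (‖u x.2.1‖ * ‖u x.2.2‖) :=
    hu.mul_of_nonneg (hu.mul_of_nonneg hu (fun _ => norm_nonneg _) (fun _ => norm_nonneg _))
      (fun _ => norm_nonneg _) (fun _ => by positivity)
  refine (hu3.mul_left C).of_norm_bounded fun x => ?_
  have hCx : ‖h (x.2.1 + x.2.2 - m - x.1)‖ ≤ C := hC ⟨_, rfl⟩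
  simp only [cubicSummand, norm_mul, RCLike.norm_conj]
  calc ‖u x.1‖ * ‖u x.2.1‖ * ‖u x.2.2‖ * ‖h (x.2.1 + x.2.2 - m - x.1)‖
      ≤ ‖u x.1‖ * ‖u x.2.1‖ * ‖u x.2.2‖ * C := by gcongr
    _ = C * (‖u x.1‖ * (‖u x.2.1‖ * ‖u x.2.2‖)) := by ring

theorem tsum_hankelRegion_eq_hankel_szegoNL (hu : Summable fun k => ‖u k‖)
    (hh : BddAbove (range fun k => ‖h k‖)) (m : ℕ) :
    ∑' x, (hankelRegion m).indicator (cubicSummand u h m) x = hankel (szegoNL u) h m := by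
  have hbij : BijOn (fun y : ℕ × ℕ × ℕ => (y.2.1, y.2.2, m + y.1 + y.2.1 - y.2.2))
      {y | y.2.2 ≤ m + y.1 + y.2.1} (hankelRegion m) := by
    refine InvOn.bijOn (f' := fun x => (x.2.1 + x.2.2 - m - x.1, x.1, x.2.1))
      ⟨?_, ?_⟩ ?_ ?_ <;>
      rintro ⟨a, b, c⟩ hx <;> simp_all [hankelRegion, Prod.ext_iff] <;> omega
  have hterm : ∀ P q a, {y : ℕ × ℕ × ℕ | y.2.2 ≤ m + y.1 + y.2.1}.indicator
      (cubicSummand u h m ∘ fun y => (y.2.1, y.2.2, m + y.1 + y.2.1 - y.2.2)) (P, q, a) =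
      if a ≤ m + P + q then conj (u q) * (u a * u (m + P + q - a)) * conj (h P) else 0 := by
    intro P q a
    simp only [indicator_apply, mem_ofPred_eq, comp_apply, cubicSummand]
    split_ifs with ha
    · rw [show a + (m + P + q - a) - m - q = P by omega]
      ring
    · rfl
  rw [hbij.tsum_indicator_eq_tsum_tsum_tsum (summable_cubicSummand hu hh m)]
  refine tsum_congr fun P => ?_
  rw [szegoNL, toeplitzAB, ← tsum_mul_right]
  refine tsum_congr fun q => ?_
  simp only [hterm, tsum_ite_le_eq_sum_range, mulCoeff, Finset.mul_sum, Finset.sum_mul]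

theorem tsum_hankelRegion_inter_eq_toeplitz_hankel (hu : Summable fun k => ‖u k‖)
    (hh : BddAbove (range fun k => ‖h k‖)) (n t : ℕ) :
    ∑' x, (hankelRegion (n + t) ∩ {x | x.2.1 ≤ n + x.1}).indicator
        (cubicSummand u h (n + t)) x
      = toeplitzAB u u (fun k => hankel u h (k + t)) n := by
  have hbij : BijOn (fun y : ℕ × ℕ × ℕ => (y.1, y.2.1, n + y.1 - y.2.1 + t + y.2.2))
      {y | y.2.1 ≤ n + y.1} (hankelRegion (n + t) ∩ {x | x.2.1 ≤ n + x.1}) := by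
    refine InvOn.bijOn (f' := fun x => (x.1, x.2.1, x.2.1 + x.2.2 - (n + t) - x.1))
      ⟨?_, ?_⟩ ?_ ?_ <;>
      rintro ⟨a, b, c⟩ hx <;> simp_all [hankelRegion, Prod.ext_iff] <;> omega
  have hterm : ∀ q a P, {y : ℕ × ℕ × ℕ | y.2.1 ≤ n + y.1}.indicator
      (cubicSummand u h (n + t) ∘ fun y => (y.1, y.2.1, n + y.1 - y.2.1 + t + y.2.2)) (q, a, P) =
      if a ≤ n + q then conj (u q) * (u a * (u (n + q - a + t + P) * conj (h P))) else 0 := by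
    intro q a P
    simp only [indicator_apply, mem_ofPred_eq, comp_apply, cubicSummand]
    split_ifs with ha
    · rw [show a + (n + q - a + t + P) - (n + t) - q = P by omega]
      ring
    · rfl
  rw [hbij.tsum_indicator_eq_tsum_tsum_tsum (summable_cubicSummand hu hh _)]
  refine tsum_congr fun q => ?_
  simp only [hterm]
  calc ∑' a, ∑' P,
        (if a ≤ n + q then conj (u q) * (u a * (u (n + q - a + t + P) * conj (h P))) else 0)
      = ∑' a, if a ≤ n + q then conj (u q) * (u a * hankel u h (n + q - a + t)) else 0 :=
        tsum_congr fun a => by split_ifs <;> simp [hankel, tsum_mul_left]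
    _ = _ := by rw [tsum_ite_le_eq_sum_range, mulCoeff, Finset.mul_sum]

theorem tsum_hankelRegion_inter_eq_hankel_toeplitz (hu : Summable fun k => ‖u k‖)
    (hh : BddAbove (range fun k => ‖h k‖)) (m : ℕ) :
    ∑' x, (hankelRegion m ∩ {x | m ≤ x.2.1}).indicator (cubicSummand u h m) x
      = hankel u (toeplitzAB u u h) m := by
  have hbij : BijOn (fun y : ℕ × ℕ × ℕ => (y.2.2, m + y.1, y.2.1))
      {y | y.2.2 ≤ y.1 + y.2.1} (hankelRegion m ∩ {x | m ≤ x.2.1}) := by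
    refine InvOn.bijOn (f' := fun x => (x.2.1 - m, x.2.2, x.1)) ⟨?_, ?_⟩ ?_ ?_ <;>
      rintro ⟨a, b, c⟩ hx <;> simp_all [hankelRegion] <;> omega
  have hterm : ∀ p q a, {y : ℕ × ℕ × ℕ | y.2.2 ≤ y.1 + y.2.1}.indicator
      (cubicSummand u h m ∘ fun y => (y.2.2, m + y.1, y.2.1)) (p, q, a) =
      if a ≤ p + q then u (m + p) * (u q * (conj (u a) * conj (h (p + q - a)))) else 0 := by
    intro p q a
    simp only [indicator_apply, mem_ofPred_eq, comp_apply, cubicSummand]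
    rw [show m + p + q - m - a = p + q - a by omega]
    split_ifs <;> ring
  rw [hbij.tsum_indicator_eq_tsum_tsum_tsum (summable_cubicSummand hu hh m)]
  refine tsum_congr fun p => ?_
  simp only [toeplitzAB, mulCoeff, Complex.conj_tsum, map_mul, map_sum, Complex.conj_conj,
    ← tsum_mul_left]
  refine tsum_congr fun q => ?_
  simp only [hterm, tsum_ite_le_eq_sum_range, Finset.mul_sum]

theorem tsum_hankelRegion_inter_inter_eq_hankel_cube (hu : Summable fun k => ‖u k‖)
    (hh : BddAbove (range fun k => ‖h k‖)) (n t : ℕ) :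
    ∑' x, (hankelRegion (n + t) ∩ {x | x.2.1 ≤ n + x.1} ∩ {x | n + t ≤ x.2.1}).indicator
        (cubicSummand u h (n + t)) x
      = hankel u (fun k => hankel u (fun k' => hankel u h (k' + t)) (k + t)) (n + t) := by
  have hbij : BijOn (fun y : ℕ × ℕ × ℕ => (y.1 + t + y.2.1, n + t + y.1, y.2.1 + t + y.2.2))
      univ (hankelRegion (n + t) ∩ {x | x.2.1 ≤ n + x.1} ∩ {x | n + t ≤ x.2.1}) := by
    refine InvOn.bijOn (f' := fun x => (x.2.1 - (n + t), x.1 + n - x.2.1,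
      x.2.1 + x.2.2 - (n + t) - x.1)) ⟨?_, ?_⟩ ?_ ?_ <;>
      rintro ⟨a, b, c⟩ hx <;> simp_all [hankelRegion, Prod.ext_iff] <;> omega
  have hterm : ∀ p s r, univ.indicator
      (cubicSummand u h (n + t) ∘ fun y => (y.1 + t + y.2.1, n + t + y.1, y.2.1 + t + y.2.2))
        (p, s, r) = u (n + t + p) * (conj (u (p + t + s)) * (u (s + t + r) * conj (h r))) := by
    intro p s r
    simp only [indicator_univ, comp_apply, cubicSummand]
    rw [show n + t + p + (s + t + r) - (n + t) - (p + t + s) = r by omega]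
    ring
  rw [hbij.tsum_indicator_eq_tsum_tsum_tsum (summable_cubicSummand hu hh _)]
  refine tsum_congr fun p => ?_
  simp only [hterm, hankel, Complex.conj_tsum, map_mul, Complex.conj_conj, tsum_mul_left]

theorem hankel_szegoNL_add_eq (hu : Summable fun k => ‖u k‖)
    (hh : BddAbove (range fun k => ‖h k‖)) (n t : ℕ) (ht : t ≤ 1) :
    hankel (szegoNL u) h (n + t)
      = toeplitzAB u u (fun k => hankel u h (k + t)) n + hankel u (toeplitzAB u u h) (n + t)
        - hankel u (fun k => hankel u (fun k' => hankel u h (k' + t)) (k + t)) (n + t) := by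
  set f := cubicSummand u h (n + t)
  set R := hankelRegion (n + t)
  set L : Set (ℕ × ℕ × ℕ) := {x | x.2.1 ≤ n + x.1}
  set H : Set (ℕ × ℕ × ℕ) := {x | n + t ≤ x.2.1}
  have hcover : L ∪ H = univ := by
    ext x
    simp only [L, H, mem_union, mem_ofPred_eq, mem_univ, iff_true]
    omega
  have hsplit : ∀ x, R.indicator f x
      = (R ∩ L).indicator f x + (R ∩ H).indicator f x - (R ∩ L ∩ H).indicator f x := by
    intro x
    have := indicator_union_add_inter_apply f (R ∩ L) (R ∩ H) x
    rw [← inter_union_distrib_left, hcover, inter_univ, ← inter_inter_distrib_left,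
      ← inter_assoc] at this
    exact eq_sub_of_add_eq this
  have hf := summable_cubicSummand hu hh (n + t)
  rw [← tsum_hankelRegion_eq_hankel_szegoNL hu hh, tsum_congr hsplit,
    Summable.tsum_sub ((hf.indicator _).add (hf.indicator _)) (hf.indicator _),
    Summable.tsum_add (hf.indicator _) (hf.indicator _),
    tsum_hankelRegion_inter_eq_toeplitz_hankel hu hh,
    tsum_hankelRegion_inter_eq_hankel_toeplitz hu hh,
    tsum_hankelRegion_inter_inter_eq_hankel_cube hu hh]

end SzegoCubic

/-- **Identities (2.2) and (2.5)**: `H_{Π(|u|²u)} = T_{|u|²}H_u + H_u T_{|u|²} - H_u³` and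
`K_{Π(|u|²u)} = T_{|u|²}K_u + K_u T_{|u|²} - K_u³`. -/
theorem statement4 (s : ℝ) (hs : 1 / 2 < s) (u : ℕ → ℂ) (hu : InHs s u)
    (h : ℕ → ℂ) (hh : Memℓp h 2) (n : ℕ) :
    hankel (szegoNL u) h n
      = toeplitzAB u u (hankel u h) n + hankel u (toeplitzAB u u h) n
        - hankel u (hankel u (hankel u h)) n ∧
    shiftedHankel (szegoNL u) h n
      = toeplitzAB u u (shiftedHankel u h) n + shiftedHankel u (toeplitzAB u u h) n
        - shiftedHankel u (shiftedHankel u (shiftedHankel u h)) n := by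
  have hu₁ := hu.summable_norm hs
  have hh_bdd : BddAbove (range fun k => ‖h k‖) :=
    memℓp_infty_iff.1 (hh.of_exponent_ge le_top)
  exact ⟨SzegoCubic.hankel_szegoNL_add_eq hu₁ hh_bdd n 0 zero_le_one,
    SzegoCubic.hankel_szegoNL_add_eq hu₁ hh_bdd n 1 le_rfl⟩

end
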